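/- arXiv:1507.05701 — 4 statements merged into one kernel-verified Lean document; each statement's English description precedes it below -/
import Mathlib

section
/- There are exactly n ways to factor the n-cycle σ = (0,1,…,n−1) as a product of two involutions of {0,1,…,n−1}. Explicitly, the factorizations are σ = I_k ∘ I_{k−1} for 1 ≤ k ≤ n, where I_k(x) is the remainder of k − x modulo n. -/
/-!
If `τ` and `ρ` are involutions with `ρ * τ = σ`, then `σ * τ * σ = ρ * τ * τ * ρ * τ = τ`, that is
`τ (x + 1) = τ x - 1`. Hence `τ x = τ 0 - x`, so `τ = I_{τ 0}` and `ρ = σ * τ = I_{τ 0 + 1}`.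
Conversely each `I_k` is an involution with `I_k * I_{k-1} = σ`, and the `n` pairs with
`1 ≤ k ≤ n` are distinct because `I_{k-1} 0 = k - 1`.
-/

open Equiv

theorem mul_mul_mul_eq_of_mul_self_eq_one {G : Type*} [Group G] {a b : G} (ha : a * a = 1)
    (hb : b * b = 1) : b * a * a * (b * a) = a := by
  rw [mul_assoc b, ha, mul_one, ← mul_assoc, hb, one_mul]

theorem Fin.intCast_val_injective {n : ℕ} : Function.Injective fun x : Fin n => ((x : ℕ) : ℤ) :=
  Nat.cast_injective.comp Fin.val_injective

theorem Fin.intCast_val_emod {n : ℕ} (x : Fin n) : ((x : ℕ) : ℤ) % n = x :=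
  Int.emod_eq_of_lt (Int.natCast_nonneg _) (by exact_mod_cast x.isLt)

section Reflections

variable {n : ℕ} {σ : Perm (Fin n)} {I : ℤ → Perm (Fin n)}

theorem reflection_mul_self (hI : ∀ (k : ℤ) (x : Fin n), ((I k x : ℕ) : ℤ) = (k - (x : ℕ)) % n)
    (k : ℤ) : I k * I k = 1 := by
  ext1 x
  apply Fin.intCast_val_injective
  simp only [Perm.mul_apply, Perm.one_apply, hI, Int.sub_emod_emod, sub_sub_cancel,
    Fin.intCast_val_emod]

theorem reflection_mul_reflection_sub_one
    (hσ : ∀ x : Fin n, ((σ x : ℕ) : ℤ) = ((x : ℕ) + 1) % n)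
    (hI : ∀ (k : ℤ) (x : Fin n), ((I k x : ℕ) : ℤ) = (k - (x : ℕ)) % n)
    (k : ℤ) : I k * I (k - 1) = σ := by
  ext1 x
  apply Fin.intCast_val_injective
  simp only [Perm.mul_apply, hI, hσ, Int.sub_emod_emod]
  ring_nf

theorem eq_reflection_of_mul_mul_eq (hσ : ∀ x : Fin n, ((σ x : ℕ) : ℤ) = ((x : ℕ) + 1) % n)
    (hI : ∀ (k : ℤ) (x : Fin n), ((I k x : ℕ) : ℤ) = (k - (x : ℕ)) % n) (hn : 0 < n)
    {τ : Perm (Fin n)} (hτ : σ * τ * σ = τ) : τ = I (τ ⟨0, hn⟩ : ℕ) := by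
  have apply_succ : ∀ x, ((τ (σ x) : ℕ) : ℤ) = ((τ x : ℕ) - 1) % n := by
    intro x
    have hx : τ x = σ (τ (σ x)) := (DFunLike.congr_fun hτ x).symm
    rw [hx, hσ, Int.emod_sub_emod, add_sub_cancel_right, Fin.intCast_val_emod]
  have apply_val : ∀ (m : ℕ) (hm : m < n), ((τ ⟨m, hm⟩ : ℕ) : ℤ) = ((τ ⟨0, hn⟩ : ℕ) - m) % n := by
    intro m
    induction m with
    | zero => intro _; rw [Nat.cast_zero, sub_zero, Fin.intCast_val_emod]
    | succ m ih =>
      intro hm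
      have hσm : σ ⟨m, by omega⟩ = ⟨m + 1, hm⟩ := by
        apply Fin.intCast_val_injective
        simp only [hσ]
        exact Int.emod_eq_of_lt (by positivity) (by exact_mod_cast hm)
      rw [← hσm, apply_succ, ih, Int.emod_sub_emod]
      push_cast
      ring_nf
  ext1 x
  apply Fin.intCast_val_injective
  simp only [hI, apply_val x x.isLt]

theorem involution_factorization_iff (hσ : ∀ x : Fin n, ((σ x : ℕ) : ℤ) = ((x : ℕ) + 1) % n)
    (hI : ∀ (k : ℤ) (x : Fin n), ((I k x : ℕ) : ℤ) = (k - (x : ℕ)) % n) (hn : 0 < n)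
    (p : Perm (Fin n) × Perm (Fin n)) :
    (p.1 * p.1 = 1 ∧ p.2 * p.2 = 1 ∧ p.2 * p.1 = σ) ↔
      ∃ k : ℤ, 1 ≤ k ∧ k ≤ n ∧ p = (I (k - 1), I k) := by
  constructor
  · rintro ⟨h1, h2, h3⟩
    set a : ℤ := ((p.1 ⟨0, hn⟩ : ℕ) : ℤ)
    have ha : p.1 = I a :=
      eq_reflection_of_mul_mul_eq hσ hI hn (h3 ▸ mul_mul_mul_eq_of_mul_self_eq_one h1 h2)
    have hσa : σ = I (a + 1) * I a := by
      simpa using (reflection_mul_reflection_sub_one hσ hI (a + 1)).symm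
    have h2a : p.2 = I (a + 1) := by
      rw [← mul_one p.2, ← h1, ← mul_assoc, h3, hσa, ha, mul_assoc, reflection_mul_self hI,
        mul_one]
    have := (p.1 ⟨0, hn⟩).isLt
    refine ⟨a + 1, by omega, by omega, Prod.ext ?_ h2a⟩
    rw [ha, add_sub_cancel_right]
  · rintro ⟨k, -, -, rfl⟩
    exact ⟨reflection_mul_self hI _, reflection_mul_self hI _,
      reflection_mul_reflection_sub_one hσ hI k⟩

theorem injOn_reflection_pair (hI : ∀ (k : ℤ) (x : Fin n), ((I k x : ℕ) : ℤ) = (k - (x : ℕ)) % n)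
    (hn : 0 < n) : Set.InjOn (fun k => (I (k - 1), I k)) (Set.Icc 1 (n : ℤ)) := by
  rintro k ⟨hk1, hkn⟩ k' ⟨hk1', hkn'⟩ h
  have h0 := congrArg (fun p => ((p.1 ⟨0, hn⟩ : ℕ) : ℤ)) h
  simp only [hI, Nat.cast_zero, sub_zero] at h0
  rw [Int.emod_eq_of_lt (by omega) (by omega), Int.emod_eq_of_lt (by omega) (by omega)] at h0
  omega

end Reflections

/-- There are exactly `n` ways to factor the `n`-cycle `σ = (0,1,…,n−1)` as a product of two
involutions of `{0,…,n−1}`; the factorizations are exactly `σ = I_k ∘ I_{k−1}` for `1 ≤ k ≤ n`,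
where `I_k x = (k − x) mod n`. -/
theorem stmt_0 (n : ℕ) (hn : 1 ≤ n) (σ : Equiv.Perm (Fin n))
    (hσ : ∀ x : Fin n, ((σ x : ℕ) : ℤ) = ((x : ℕ) + 1) % n)
    (I : ℤ → Equiv.Perm (Fin n))
    (hI : ∀ (k : ℤ) (x : Fin n), ((I k x : ℕ) : ℤ) = (k - (x : ℕ)) % n) :
    (Finset.univ.filter fun p : Equiv.Perm (Fin n) × Equiv.Perm (Fin n) =>
        p.1 * p.1 = 1 ∧ p.2 * p.2 = 1 ∧ p.2 * p.1 = σ).card = n ∧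
    ∀ p : Equiv.Perm (Fin n) × Equiv.Perm (Fin n),
      (p.1 * p.1 = 1 ∧ p.2 * p.2 = 1 ∧ p.2 * p.1 = σ) ↔
        ∃ k : ℤ, 1 ≤ k ∧ k ≤ n ∧ p = (I (k - 1), I k) := by
  have hfactor := involution_factorization_iff hσ hI hn
  refine ⟨?_, hfactor⟩
  have himage : (Finset.univ.filter fun p : Equiv.Perm (Fin n) × Equiv.Perm (Fin n) =>
        p.1 * p.1 = 1 ∧ p.2 * p.2 = 1 ∧ p.2 * p.1 = σ) =
      (Finset.Icc 1 (n : ℤ)).image fun k => (I (k - 1), I k) := by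
    ext p
    simp only [Finset.mem_filter, Finset.mem_univ, true_and, hfactor, Finset.mem_image,
      Finset.mem_Icc, and_assoc, @eq_comm _ p]
  rw [himage, Finset.card_image_of_injOn (by simpa using injOn_reflection_pair hI hn),
    Int.card_Icc]
  simp
end

section
/- If σ is a permutation of a finite set and σ = τ₂ ∘ τ₁ with τ₁, τ₂ involutions, then for any cycle O of σ (viewed as the set of its points), τ₁(O) = τ₂(O), and τ₁(O) is the set of points of a single cycle of σ of the same length |O|. -/
/-!
Conjugating by a permutation `τ` carries the cycles of `σ` onto the cycles of `τ σ τ⁻¹`. When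
`σ = τ₂ τ₁` with both factors involutions, conjugation by either factor inverts `σ`, and `σ⁻¹`
has the same cycles as `σ`; so `τ₁` and `τ₂` map the cycle of `x` onto the cycles through
`τ₁ x` and `τ₂ x = σ (τ₁ x)`, which coincide.
-/

open Equiv Perm

section Involutions

variable {G : Type*} [Group G] {a b : G}

theorem conj_mul_eq_inv_of_mul_self_eq_one_left (ha : a * a = 1) (hb : b * b = 1) :
    a * (b * a) * a⁻¹ = (b * a)⁻¹ := by
  rw [inv_eq_of_mul_eq_one_right ha, mul_inv_rev, inv_eq_of_mul_eq_one_right ha,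
    inv_eq_of_mul_eq_one_right hb, mul_assoc, mul_assoc, ha, mul_one]

theorem conj_mul_eq_inv_of_mul_self_eq_one_right (ha : a * a = 1) (hb : b * b = 1) :
    b * (b * a) * b⁻¹ = (b * a)⁻¹ := by
  rw [← mul_assoc, hb, one_mul, mul_inv_rev, inv_eq_of_mul_eq_one_right ha]

end Involutions

namespace Equiv.Perm

variable {α : Type*}

theorem setOf_zpow_apply_eq_setOf_sameCycle (σ : Perm α) (x : α) :
    {y | ∃ t : ℤ, y = (σ ^ t) x} = {y | σ.SameCycle x y} := by
  ext y
  exact exists_congr fun _ => eq_comm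

theorem image_setOf_sameCycle (τ σ : Perm α) (x : α) :
    τ '' {y | σ.SameCycle x y} = {y | (τ * σ * τ⁻¹).SameCycle (τ x) y} := by
  ext y
  rw [τ.image_eq_preimage_symm, Set.mem_preimage, Set.mem_ofPred_eq, Set.mem_ofPred_eq,
    sameCycle_conj, inv_def, symm_apply_apply]

theorem image_setOf_sameCycle_of_conj_eq_inv {τ σ : Perm α} (hτ : τ * σ * τ⁻¹ = σ⁻¹) (x : α) :
    τ '' {y | σ.SameCycle x y} = {y | σ.SameCycle (τ x) y} := by
  simp only [image_setOf_sameCycle, hτ, sameCycle_inv]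

end Equiv.Perm

theorem stmt_2_general {α : Type*} (σ τ₁ τ₂ : Equiv.Perm α)
    (h1 : τ₁ * τ₁ = 1) (h2 : τ₂ * τ₂ = 1) (h : σ = τ₂ * τ₁)
    (x : α) (O : Set α) (hO : O = {y | ∃ t : ℤ, y = (σ ^ t) x}) :
    τ₁ '' O = τ₂ '' O ∧
    (∃ z : α, τ₁ '' O = {y | ∃ t : ℤ, y = (σ ^ t) z}) ∧
    (τ₁ '' O).ncard = O.ncard := by
  have hτ₁O : τ₁ '' O = {y | σ.SameCycle (τ₁ x) y} := by
    rw [hO, setOf_zpow_apply_eq_setOf_sameCycle, image_setOf_sameCycle_of_conj_eq_inv]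
    rw [h]; exact conj_mul_eq_inv_of_mul_self_eq_one_left h1 h2
  have hτ₂O : τ₂ '' O = {y | σ.SameCycle (τ₂ x) y} := by
    rw [hO, setOf_zpow_apply_eq_setOf_sameCycle, image_setOf_sameCycle_of_conj_eq_inv]
    rw [h]; exact conj_mul_eq_inv_of_mul_self_eq_one_right h1 h2
  have hτ₂x : τ₂ x = σ (τ₁ x) := by
    rw [h, mul_apply, ← mul_apply τ₁, h1, one_apply]
  have hcycle : σ.SameCycle (τ₁ x) (τ₂ x) := hτ₂x ▸ (SameCycle.refl σ _).apply_right
  refine ⟨?_, ⟨τ₁ x, ?_⟩, Set.ncard_image_of_injective O τ₁.injective⟩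
  · rw [hτ₁O, hτ₂O]
    ext y
    exact ⟨hcycle.symm.trans, hcycle.trans⟩
  · rw [hτ₁O, setOf_zpow_apply_eq_setOf_sameCycle]

/-- If `σ = τ₂ ∘ τ₁` with `τ₁, τ₂` involutions, and `O` is the set of points of a cycle of `σ`,
then `τ₁(O) = τ₂(O)`, `τ₁(O)` is the point set of a single cycle of `σ`, and it has the same
cardinality as `O`. -/
theorem stmt_2 {α : Type*} [Fintype α] (σ τ₁ τ₂ : Equiv.Perm α)
    (h1 : τ₁ * τ₁ = 1) (h2 : τ₂ * τ₂ = 1) (h : σ = τ₂ * τ₁)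
    (x : α) (O : Set α) (hO : O = {y | ∃ t : ℤ, y = (σ ^ t) x}) :
    τ₁ '' O = τ₂ '' O ∧
    (∃ z : α, τ₁ '' O = {y | ∃ t : ℤ, y = (σ ^ t) z}) ∧
    (τ₁ '' O).ncard = O.ncard :=
  stmt_2_general σ τ₁ τ₂ h1 h2 h x O hO
end

section
/- Let σ be the permutation of {0,1,…,2n−1} consisting of the two n-cycles (0,1,…,n−1) and (n,n+1,…,2n−1). Then there are exactly n ways to write σ as a product of two involutions that exchange the two cycles of σ: namely σ = J_k ∘ J_{k−1} for k = 0,…,n−1, where J_k is the involution whose transpositions are (x, n + ((k − x) mod n)) for x = 0,…,n−1. -/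
/-!
If `σ = τ₂ * τ₁` with `τ₁, τ₂` involutions, then `τ₂ = σ * τ₁` and `τ₁` inverts `σ`, i.e.
`τ₁ σ τ₁⁻¹ = σ⁻¹`, so `τ₁ (σ ^ i x) = σ ^ (-i) (τ₁ x)`. If `τ₁` moreover maps the cycle of `0`
onto the other cycle, the cycle of `0` and its image under `τ₁` exhaust all points, so `τ₁` is
determined by `τ₁ 0 ∈ {n, …, 2n - 1}`. Each of these `n` values is attained by some `J (k - 1)`,
since `J k * J (k - 1) = σ` is a direct computation modulo `n`.
-/

open Equiv

section Involutions

variable {G : Type*} [Group G] {σ τ₁ τ₂ : G}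

theorem conj_eq_inv_of_mul_eq (h₁ : τ₁ * τ₁ = 1) (h₂ : τ₂ * τ₂ = 1) (h : τ₂ * τ₁ = σ) :
    τ₁ * σ * τ₁⁻¹ = σ⁻¹ := by
  rw [← h, mul_inv_rev, ← mul_eq_one_iff_eq_inv.mp h₁, ← mul_eq_one_iff_eq_inv.mp h₂]
  simp only [mul_assoc, h₁, mul_one]

theorem eq_mul_of_mul_eq_of_mul_self (h₁ : τ₁ * τ₁ = 1) (h : τ₂ * τ₁ = σ) : τ₂ = σ * τ₁ := by
  rw [← h, mul_assoc, h₁, mul_one]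

end Involutions

namespace Equiv.Perm

variable {α : Type*} {σ τ τ' : Perm α}

theorem apply_pow_apply_of_conj_eq_inv (h : τ * σ * τ⁻¹ = σ⁻¹) (i : ℕ) (x : α) :
    τ ((σ ^ i) x) = (σ⁻¹ ^ i) (τ x) := by
  rw [← h, conj_pow]
  simp

theorem apply_apply_of_mul_self (h : τ * τ = 1) (x : α) : τ (τ x) = x := by
  rw [← mul_apply, h, one_apply]

theorem eq_of_conj_eq_inv (hτ : τ * τ = 1) (hτ' : τ' * τ' = 1) (h : τ * σ * τ⁻¹ = σ⁻¹)
    (h' : τ' * σ * τ'⁻¹ = σ⁻¹) {x : α} (hx : τ x = τ' x)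
    (hcover : ∀ y, ∃ i : ℕ, y = (σ ^ i) x ∨ y = τ ((σ ^ i) x)) : τ = τ' := by
  have horbit : ∀ i : ℕ, τ ((σ ^ i) x) = τ' ((σ ^ i) x) := fun i => by
    rw [apply_pow_apply_of_conj_eq_inv h, apply_pow_apply_of_conj_eq_inv h', hx]
  ext y
  obtain ⟨i, rfl | rfl⟩ := hcover y
  · rw [horbit]
  · rw [apply_apply_of_mul_self hτ, horbit, apply_apply_of_mul_self hτ']

end Equiv.Perm

section TwoCycles

variable {n : ℕ} {σ : Perm (Fin (2 * n))}

theorem pow_apply_zero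
    (hσ : ∀ x : Fin (2 * n), (x : ℕ) < n → ((σ x : ℕ) : ℤ) = ((x : ℕ) + 1) % n)
    {i : ℕ} (hi : i < n) : (σ ^ i) ⟨0, by omega⟩ = ⟨i, by omega⟩ := by
  induction i with
  | zero => rfl
  | succ i ih =>
    rw [pow_succ', Perm.mul_apply, ih (by omega)]
    have h : ((σ ⟨i, by omega⟩ : ℕ) : ℤ) = ((i : ℕ) + 1) % n := hσ _ (by simp only; omega)
    rw [Int.emod_eq_of_lt (by positivity) (by omega)] at h
    ext
    simp only
    omega

theorem exists_eq_pow_apply_zero (hn : 0 < n)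
    (hσ : ∀ x : Fin (2 * n), (x : ℕ) < n → ((σ x : ℕ) : ℤ) = ((x : ℕ) + 1) % n)
    {τ : Perm (Fin (2 * n))}
    (hτ : τ '' {x : Fin (2 * n) | (x : ℕ) < n} = {x : Fin (2 * n) | n ≤ (x : ℕ)})
    (y : Fin (2 * n)) :
    ∃ i : ℕ, y = (σ ^ i) ⟨0, by omega⟩ ∨ y = τ ((σ ^ i) ⟨0, by omega⟩) := by
  by_cases hy : (y : ℕ) < n
  · exact ⟨y, Or.inl (by rw [pow_apply_zero hσ hy])⟩
  · obtain ⟨x, hx, rfl⟩ : y ∈ τ '' {x | (x : ℕ) < n} := by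
      rw [hτ]
      exact not_lt.mp hy
    exact ⟨x, Or.inr (by rw [pow_apply_zero hσ hx])⟩

section Reflections

variable {J : ℤ → Perm (Fin (2 * n))}
  (hJ : ∀ (k : ℤ) (x : Fin (2 * n)), (x : ℕ) < n →
    ((J k x : ℕ) : ℤ) = n + (k - (x : ℕ)) % n ∧ J k (J k x) = x)
include hJ

theorem le_J_apply (k : ℤ) {x : Fin (2 * n)} (hx : (x : ℕ) < n) : n ≤ (J k x : ℕ) := by
  have h := (hJ k x hx).1
  have := Int.emod_nonneg (k - (x : ℕ)) (by omega : (n : ℤ) ≠ 0)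
  omega

theorem J_apply_of_le (k : ℤ) {y : Fin (2 * n)} (hy : n ≤ (y : ℕ)) :
    ((J k y : ℕ) : ℤ) = (k - ((y : ℕ) - n)) % n := by
  have hn : (0 : ℤ) < n := by have := y.isLt; omega
  have := Int.emod_nonneg (k - ((y : ℕ) - n)) hn.ne'
  have := Int.emod_lt_of_pos (k - ((y : ℕ) - n)) hn
  set x : Fin (2 * n) := ⟨((k - ((y : ℕ) - n)) % n).toNat, by omega⟩
  have hx : ((x : ℕ) : ℤ) = (k - ((y : ℕ) - n)) % n := by simp only [x]; omega
  have hJx : J k x = y := by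
    have h := (hJ k x (by omega)).1
    rw [hx, Int.sub_emod_emod, sub_sub_cancel, Int.emod_eq_of_lt (by omega) (by omega)] at h
    ext
    omega
  have h := (hJ k x (by omega)).2
  rw [hJx] at h
  rw [h, hx]

theorem J_apply_lt (k : ℤ) {y : Fin (2 * n)} (hy : n ≤ (y : ℕ)) : (J k y : ℕ) < n := by
  have h := J_apply_of_le hJ k hy
  have := Int.emod_lt_of_pos (k - ((y : ℕ) - n)) (b := n) (by have := y.isLt; omega)
  omega

theorem J_mul_self (k : ℤ) : J k * J k = 1 := by
  refine Equiv.ext fun x => ?_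
  rw [Perm.mul_apply, Perm.one_apply]
  rcases lt_or_ge (x : ℕ) n with hx | hx
  · exact (hJ k x hx).2
  · exact (J k).injective (hJ k _ (J_apply_lt hJ k hx)).2

theorem J_image (k : ℤ) :
    J k '' {x : Fin (2 * n) | (x : ℕ) < n} = {x : Fin (2 * n) | n ≤ (x : ℕ)} := by
  ext y
  constructor
  · rintro ⟨x, hx, rfl⟩
    exact le_J_apply hJ k hx
  · intro hy
    exact ⟨J k y, J_apply_lt hJ k hy, Perm.apply_apply_of_mul_self (J_mul_self hJ k) y⟩

theorem J_apply_zero (hn : 0 < n) (k : ℤ) : ((J k ⟨0, by omega⟩ : ℕ) : ℤ) = n + k % n := by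
  simpa using (hJ k ⟨0, by omega⟩ hn).1

theorem J_injOn (hn : 0 < n) : Set.InjOn J (Set.Ico 0 n) := by
  intro a ha b hb hab
  have h := J_apply_zero hJ hn a
  rw [hab, J_apply_zero hJ hn b, Int.emod_eq_of_lt ha.1 ha.2, Int.emod_eq_of_lt hb.1 hb.2] at h
  omega

variable (hσ₁ : ∀ x : Fin (2 * n), (x : ℕ) < n → ((σ x : ℕ) : ℤ) = ((x : ℕ) + 1) % n)
  (hσ₂ : ∀ x : Fin (2 * n), n ≤ (x : ℕ) → ((σ x : ℕ) : ℤ) = n + (((x : ℕ) - (n : ℤ)) + 1) % n)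
include hσ₁ hσ₂

theorem J_mul_J_sub_one (k : ℤ) : J k * J (k - 1) = σ := by
  refine Equiv.ext fun x => Fin.ext (Int.ofNat_inj.mp ?_)
  rw [Perm.mul_apply]
  rcases lt_or_ge (x : ℕ) n with hx | hx
  · rw [J_apply_of_le hJ k (le_J_apply hJ (k - 1) hx), (hJ (k - 1) x hx).1, hσ₁ x hx,
      add_sub_cancel_left, Int.sub_emod_emod]
    congr 1
    ring
  · rw [(hJ k _ (J_apply_lt hJ (k - 1) hx)).1, J_apply_of_le hJ (k - 1) hx, hσ₂ x hx,
      Int.sub_emod_emod]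
    congr 2
    ring

theorem exists_eq_J_sub_one (hn : 0 < n) {τ : Perm (Fin (2 * n))} (hτ : τ * τ = 1)
    (hinv : τ * σ * τ⁻¹ = σ⁻¹)
    (himage : τ '' {x : Fin (2 * n) | (x : ℕ) < n} = {x : Fin (2 * n) | n ≤ (x : ℕ)}) :
    ∃ k : ℤ, 0 ≤ k ∧ k < n ∧ τ = J (k - 1) := by
  set x₀ : Fin (2 * n) := ⟨0, by omega⟩
  have hn' : (0 : ℤ) < n := by omega
  have hτx₀ : n ≤ (τ x₀ : ℕ) := by
    have h : τ x₀ ∈ τ '' {x : Fin (2 * n) | (x : ℕ) < n} := Set.mem_image_of_mem τ hn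
    rwa [himage] at h
  have := (τ x₀).isLt
  refine ⟨((τ x₀ : ℕ) - n + 1) % n, Int.emod_nonneg _ hn'.ne', Int.emod_lt_of_pos _ hn', ?_⟩
  refine Perm.eq_of_conj_eq_inv hτ (J_mul_self hJ _) hinv
    (conj_eq_inv_of_mul_eq (J_mul_self hJ _) (J_mul_self hJ _) (J_mul_J_sub_one hJ hσ₁ hσ₂ _))
    ?_ (exists_eq_pow_apply_zero hn hσ₁ himage)
  refine Fin.ext (Int.ofNat_inj.mp ?_)
  rw [J_apply_zero hJ hn, Int.emod_sub_emod, add_sub_cancel_right,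
    Int.emod_eq_of_lt (by omega) (by omega)]
  ring

theorem exchanging_factorization_iff (hn : 0 < n)
    (p : Perm (Fin (2 * n)) × Perm (Fin (2 * n))) :
    (p.1 * p.1 = 1 ∧ p.2 * p.2 = 1 ∧ p.2 * p.1 = σ ∧
        p.1 '' {x : Fin (2 * n) | (x : ℕ) < n} = {x : Fin (2 * n) | n ≤ (x : ℕ)} ∧
        p.2 '' {x : Fin (2 * n) | (x : ℕ) < n} = {x : Fin (2 * n) | n ≤ (x : ℕ)}) ↔
      ∃ k : ℤ, 0 ≤ k ∧ k < n ∧ p = (J (k - 1), J k) := by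
  obtain ⟨τ₁, τ₂⟩ := p
  constructor
  · rintro ⟨h₁, h₂, h, himage, -⟩
    obtain ⟨k, hk₀, hkn, rfl⟩ :=
      exists_eq_J_sub_one hJ hσ₁ hσ₂ hn h₁ (conj_eq_inv_of_mul_eq h₁ h₂ h) himage
    refine ⟨k, hk₀, hkn, Prod.ext rfl ?_⟩
    rw [eq_mul_of_mul_eq_of_mul_self h₁ h, ← J_mul_J_sub_one hJ hσ₁ hσ₂ k, mul_assoc,
      J_mul_self hJ, mul_one]
  · rintro ⟨k, -, -, hp⟩
    obtain ⟨rfl, rfl⟩ := Prod.mk.inj hp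
    exact ⟨J_mul_self hJ _, J_mul_self hJ _, J_mul_J_sub_one hJ hσ₁ hσ₂ k, J_image hJ _,
      J_image hJ _⟩

end Reflections

end TwoCycles

open scoped Classical in
theorem stmt_4 (n : ℕ) (hn : 1 ≤ n) (σ : Equiv.Perm (Fin (2 * n)))
    (hσ₁ : ∀ x : Fin (2 * n), (x : ℕ) < n → ((σ x : ℕ) : ℤ) = ((x : ℕ) + 1) % n)
    (hσ₂ : ∀ x : Fin (2 * n), n ≤ (x : ℕ) → ((σ x : ℕ) : ℤ) = n + (((x : ℕ) - (n : ℤ)) + 1) % n)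
    (J : ℤ → Equiv.Perm (Fin (2 * n)))
    (hJ : ∀ (k : ℤ) (x : Fin (2 * n)), (x : ℕ) < n →
      ((J k x : ℕ) : ℤ) = n + (k - (x : ℕ)) % n ∧ J k (J k x) = x) :
    (Finset.univ.filter fun p : Equiv.Perm (Fin (2 * n)) × Equiv.Perm (Fin (2 * n)) =>
        p.1 * p.1 = 1 ∧ p.2 * p.2 = 1 ∧ p.2 * p.1 = σ ∧
        p.1 '' {x : Fin (2 * n) | (x : ℕ) < n} = {x : Fin (2 * n) | n ≤ (x : ℕ)} ∧
        p.2 '' {x : Fin (2 * n) | (x : ℕ) < n} = {x : Fin (2 * n) | n ≤ (x : ℕ)}).card = n ∧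
    ∀ p : Equiv.Perm (Fin (2 * n)) × Equiv.Perm (Fin (2 * n)),
      (p.1 * p.1 = 1 ∧ p.2 * p.2 = 1 ∧ p.2 * p.1 = σ ∧
        p.1 '' {x : Fin (2 * n) | (x : ℕ) < n} = {x : Fin (2 * n) | n ≤ (x : ℕ)} ∧
        p.2 '' {x : Fin (2 * n) | (x : ℕ) < n} = {x : Fin (2 * n) | n ≤ (x : ℕ)}) ↔
      ∃ k : ℤ, 0 ≤ k ∧ k < n ∧ p = (J (k - 1), J k) := by
  have hfactor := exchanging_factorization_iff hJ hσ₁ hσ₂ hn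
  refine ⟨?_, hfactor⟩
  calc _ = ((Finset.Ico 0 (n : ℤ)).image fun k => (J (k - 1), J k)).card := by
        congr 1
        ext p
        simp only [Finset.mem_filter, Finset.mem_univ, true_and, Finset.mem_image,
          Finset.mem_Ico, hfactor p]
        constructor
        · rintro ⟨k, hk₀, hkn, rfl⟩
          exact ⟨k, ⟨hk₀, hkn⟩, rfl⟩
        · rintro ⟨k, ⟨hk₀, hkn⟩, rfl⟩
          exact ⟨k, hk₀, hkn, rfl⟩
    _ = n := by
      have hinj : Set.InjOn (fun k => (J (k - 1), J k)) (Finset.Ico 0 (n : ℤ)) := by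
        rw [Finset.coe_Ico]
        exact fun a ha b hb hab => J_injOn hJ hn ha hb (congrArg Prod.snd hab)
      rw [Finset.card_image_of_injOn hinj, Int.card_Ico, sub_zero, Int.toNat_natCast]
end

section
/- For every permutation σ of [n], the number N_n(σ) of ordered pairs of involutions (τ₁, τ₂) with σ = τ₂ ∘ τ₁ is at least B_n(σ), the product of the cycle lengths of σ. -/
open Equiv Equiv.Perm Finset
open scoped Function

section Aux

variable {α : Type*} [Fintype α] [DecidableEq α]

private lemma disjoint_pow_pow {f g : Equiv.Perm α} (h : f.Disjoint g) (m k : ℕ) :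
    (f ^ m).Disjoint (g ^ k) :=
  Equiv.Perm.disjoint_iff_disjoint_support.mpr
    ((Equiv.Perm.disjoint_iff_disjoint_support.mp h).mono
      (Equiv.Perm.support_pow_le f m) (Equiv.Perm.support_pow_le g k))

/-- For every cycle there is an involutive "reflection" conjugating it to its inverse,
supported inside the cycle's support. -/
private lemma cycle_reflection {c : Equiv.Perm α} (hc : c.IsCycle) :
    ∃ τ : Equiv.Perm α, τ * τ = 1 ∧ τ * c * τ = c⁻¹ ∧ τ.support ⊆ c.support := by
  classical
  set a : α := Classical.choose hc with ha
  have haspec := Classical.choose_spec hc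
  let e : Subgroup.zpowers c ≃ c.support := hc.zpowersEquivSupport
  have he : ∀ (g : Subgroup.zpowers c), (e g : α) = (g : Equiv.Perm α) a := fun g => rfl
  let ρ : Equiv.Perm {x // x ∈ c.support} :=
    (e.symm.trans (Equiv.inv (Subgroup.zpowers c))).trans e
  let τ : Equiv.Perm α := Equiv.Perm.ofSubtype ρ
  have hmem : ∀ (g : Subgroup.zpowers c), (g : Equiv.Perm α) a ∈ c.support := by
    intro g
    have := (e g).2
    rwa [he] at this
  have key : ∀ (g : Subgroup.zpowers c), τ ((g : Equiv.Perm α) a) = ((g⁻¹ : Subgroup.zpowers c) : Equiv.Perm α) a := by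
    intro g
    have h1 : τ ((g : Equiv.Perm α) a) = (ρ ⟨(g : Equiv.Perm α) a, hmem g⟩ : α) :=
      Equiv.Perm.ofSubtype_apply_of_mem ρ (hmem g)
    have h2 : e.symm ⟨(g : Equiv.Perm α) a, hmem g⟩ = g := by
      rw [Equiv.symm_apply_eq]
      exact Subtype.ext (he g).symm
    rw [h1]
    show ((e ((e.symm ⟨(g : Equiv.Perm α) a, hmem g⟩)⁻¹)) : α) = _
    rw [h2, he]
  have hexists : ∀ x ∈ c.support, ∃ g : Subgroup.zpowers c, (g : Equiv.Perm α) a = x := by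
    intro x hx
    obtain ⟨i, hi⟩ := haspec.2 (Equiv.Perm.mem_support.mp hx)
    exact ⟨⟨c ^ i, Subgroup.zpow_mem_zpowers c i⟩, hi⟩
  have hτfix : ∀ x, x ∉ c.support → τ x = x := by
    intro x hx
    exact Equiv.Perm.ofSubtype_apply_of_not_mem ρ hx
  have hsupp : τ.support ⊆ c.support := by
    intro x hx
    by_contra h
    exact (Equiv.Perm.mem_support.mp hx) (hτfix x h)
  refine ⟨τ, ?_, ?_, hsupp⟩
  · ext x
    by_cases hx : x ∈ c.support
    · obtain ⟨g, rfl⟩ := hexists x hx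
      simp only [Equiv.Perm.mul_apply, Equiv.Perm.one_apply]
      rw [key g, key g⁻¹, inv_inv]
    · simp only [Equiv.Perm.mul_apply, Equiv.Perm.one_apply]
      rw [hτfix x hx, hτfix x hx]
  · ext x
    by_cases hx : x ∈ c.support
    · obtain ⟨g, rfl⟩ := hexists x hx
      simp only [Equiv.Perm.mul_apply]
      rw [key g]
      have h3 : c (((g⁻¹ : Subgroup.zpowers c) : Equiv.Perm α) a) =
          ((⟨c, Subgroup.mem_zpowers c⟩ * g⁻¹ : Subgroup.zpowers c) : Equiv.Perm α) a := rfl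
      rw [h3, key _]
      have h4 : ((⟨c, Subgroup.mem_zpowers c⟩ * g⁻¹ : Subgroup.zpowers c)⁻¹ :
          Subgroup.zpowers c) = g * ⟨c⁻¹, inv_mem (Subgroup.mem_zpowers c)⟩ := by
        rw [mul_inv_rev, inv_inv]
        congr 1
      rw [h4]
      show ((g : Equiv.Perm α) * c⁻¹) a = c⁻¹ ((g : Equiv.Perm α) a)
      obtain ⟨g, i, rfl⟩ := g
      simp only [Equiv.Perm.mul_apply]
      have : c⁻¹ * c ^ i = c ^ i * c⁻¹ := (((Commute.refl c).zpow_right i).inv_left).eq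
      calc ((c ^ i : Equiv.Perm α)) (c⁻¹ a) = ((c ^ i : Equiv.Perm α) * c⁻¹) a := rfl
        _ = (c⁻¹ * c ^ i) a := by rw [← this]
        _ = c⁻¹ ((c ^ i : Equiv.Perm α) a) := rfl
    · simp only [Equiv.Perm.mul_apply]
      have hcx : c x = x := by
        by_contra h; exact hx (Equiv.Perm.mem_support.mpr h)
      have hcinv : c⁻¹ x = x := by
        apply Equiv.injective c
        rw [← Equiv.Perm.mul_apply, mul_inv_cancel, Equiv.Perm.one_apply, hcx]
      rw [hτfix x hx, hcx, hτfix x hx, hcinv]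

/-- Every permutation admits an involution conjugating each of its cycle factors to
its inverse. -/
private lemma exists_reflecting (σ : Equiv.Perm α) :
    ∃ τ : Equiv.Perm α, τ * τ = 1 ∧ τ.support ⊆ σ.support ∧
      ∀ c ∈ σ.cycleFactorsFinset, τ * c * τ = c⁻¹ := by
  classical
  induction σ using Equiv.Perm.cycle_induction_on with
  | base_one =>
    refine ⟨1, one_mul 1, by simp, ?_⟩
    intro c hc
    simp [Equiv.Perm.cycleFactorsFinset_one] at hc
  | base_cycles σ hσ =>
    obtain ⟨τ, h1, h2, h3⟩ := cycle_reflection hσ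
    refine ⟨τ, h1, h3, ?_⟩
    intro c hc
    rw [hσ.cycleFactorsFinset_eq_singleton, Finset.mem_singleton] at hc
    subst hc; exact h2
  | induction_disjoint σ π hd hc hσ hπ =>
    obtain ⟨τ₁, h1, hs1, hc1⟩ := hσ
    obtain ⟨τ₂, h2, hs2, hc2⟩ := hπ
    have hdis : τ₁.Disjoint τ₂ :=
      Equiv.Perm.disjoint_iff_disjoint_support.mpr
        ((Equiv.Perm.disjoint_iff_disjoint_support.mp hd).mono hs1 hs2)
    have hcomm : Commute τ₁ τ₂ := hdis.commute
    refine ⟨τ₁ * τ₂, ?_, ?_, ?_⟩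
    · calc τ₁ * τ₂ * (τ₁ * τ₂) = τ₁ * τ₁ * (τ₂ * τ₂) := by
            rw [mul_assoc, mul_assoc, ← mul_assoc τ₂, ← hcomm.eq, mul_assoc]
      _ = 1 := by rw [h1, h2, one_mul]
    · refine le_trans (Equiv.Perm.support_mul_le τ₁ τ₂) ?_
      rw [hd.support_mul]
      exact sup_le_sup hs1 hs2
    · intro c hcmem
      rw [hd.cycleFactorsFinset_mul_eq_union, Finset.mem_union] at hcmem
      rcases hcmem with h | h
      · have hcsupp : c.support ⊆ σ.support := Equiv.Perm.mem_cycleFactorsFinset_support_le h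
        have hdc : τ₂.Disjoint c :=
          Equiv.Perm.disjoint_iff_disjoint_support.mpr
            ((Equiv.Perm.disjoint_iff_disjoint_support.mp hd).symm.mono hs2 hcsupp)
        calc τ₁ * τ₂ * c * (τ₁ * τ₂) = τ₁ * (τ₂ * c) * (τ₁ * τ₂) := by rw [mul_assoc τ₁]
          _ = τ₁ * (c * τ₂) * (τ₁ * τ₂) := by rw [hdc.commute.eq]
          _ = τ₁ * c * (τ₂ * τ₁) * τ₂ := by group
          _ = τ₁ * c * (τ₁ * τ₂) * τ₂ := by rw [← hcomm.eq]
          _ = (τ₁ * c * τ₁) * (τ₂ * τ₂) := by group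
          _ = c⁻¹ := by rw [hc1 c h, h2, mul_one]
      · have hcsupp : c.support ⊆ π.support := Equiv.Perm.mem_cycleFactorsFinset_support_le h
        have hdc : τ₁.Disjoint c :=
          Equiv.Perm.disjoint_iff_disjoint_support.mpr
            ((Equiv.Perm.disjoint_iff_disjoint_support.mp hd).mono hs1 hcsupp)
        calc τ₁ * τ₂ * c * (τ₁ * τ₂)
            = τ₁ * τ₂ * (c * τ₁) * τ₂ := by group
          _ = τ₁ * τ₂ * (τ₁ * c) * τ₂ := by rw [hdc.commute.symm.eq]
          _ = τ₁ * (τ₂ * τ₁) * (c * τ₂) := by group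
          _ = τ₁ * (τ₁ * τ₂) * (c * τ₂) := by rw [hcomm.symm.eq]
          _ = τ₁ * τ₁ * (τ₂ * c * τ₂) := by group
          _ = c⁻¹ := by rw [h1, one_mul, hc2 c h]

end Aux

/-- For every permutation `σ` of `[n]`, the number of ordered pairs of involutions `(τ₁, τ₂)`
with `σ = τ₂ ∘ τ₁` is at least `B_n(σ)`, the product of the cycle lengths of `σ`. -/
theorem stmt_7 (n : ℕ) (σ : Equiv.Perm (Fin n)) :
    σ.cycleType.prod ≤
      (Finset.univ.filter fun p : Equiv.Perm (Fin n) × Equiv.Perm (Fin n) =>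
        p.1 * p.1 = 1 ∧ p.2 * p.2 = 1 ∧ p.2 * p.1 = σ).card := by
  classical
  obtain ⟨τ, hτ2, -, hτc⟩ := exists_reflecting σ
  set s := σ.cycleFactorsFinset with hs
  have hτinv : τ⁻¹ = τ := inv_eq_of_mul_eq_one_right hτ2
  -- pairwise disjointness of cycle factors
  have hpd : (↑s : Set (Equiv.Perm (Fin n))).Pairwise Equiv.Perm.Disjoint :=
    Equiv.Perm.cycleFactorsFinset_pairwise_disjoint σ
  -- commutation facts
  have hcomm_id : (↑s : Set (Equiv.Perm (Fin n))).Pairwise (Commute on id) :=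
    hpd.mono' fun _ _ h => h.commute
  have hσprod : s.noncommProd id hcomm_id = σ := σ.cycleFactorsFinset_noncommProd hcomm_id
  -- the index type
  let D := ∀ c : {x // x ∈ s}, Fin (orderOf c.val)
  have hcard : Fintype.card D = σ.cycleType.prod := by
    rw [Fintype.card_pi]
    have h1 : ∀ c : {x // x ∈ s}, Fintype.card (Fin (orderOf c.val)) = c.val.support.card := by
      intro c
      rw [Fintype.card_fin]
      exact ((Equiv.Perm.mem_cycleFactorsFinset_iff.mp c.2).1).orderOf
    calc (∏ c : {x // x ∈ s}, Fintype.card (Fin (orderOf c.val)))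
        = ∏ c : {x // x ∈ s}, c.val.support.card := by
          exact Finset.prod_congr rfl fun c _ => h1 c
      _ = ∏ c ∈ s, c.support.card := Finset.prod_coe_sort s (fun c => c.support.card)
      _ = σ.cycleType.prod := by
          rw [Equiv.Perm.cycleType_def, Finset.prod]
          rfl
  -- exponent function
  let F : D → Equiv.Perm (Fin n) → ℕ := fun f c =>
    if h : c ∈ s then (f ⟨c, h⟩).val else 0
  have hcommF : ∀ f : D, (↑s : Set (Equiv.Perm (Fin n))).Pairwise
      (Commute on fun c => c ^ F f c) := by
    intro f c hc d hd hcd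
    exact (disjoint_pow_pow (hpd hc hd hcd) _ _).commute
  let z : D → Equiv.Perm (Fin n) := fun f => s.noncommProd (fun c => c ^ F f c) (hcommF f)
  -- conjugation by τ inverts each z f, and inverts σ
  have hconj : ∀ (k : Equiv.Perm (Fin n) → ℕ)
      (hk : (↑s : Set (Equiv.Perm (Fin n))).Pairwise (Commute on fun c => c ^ k c)),
      τ * (s.noncommProd (fun c => c ^ k c) hk) * τ =
        (s.noncommProd (fun c => c ^ k c) hk)⁻¹ := by
    intro k hk
    have hmap : τ * (s.noncommProd (fun c => c ^ k c) hk) * τ⁻¹ =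
        s.noncommProd (fun c => (MulAut.conj τ) (c ^ k c)) (by
          intro c hc d hd hcd
          simp only [Function.onFun, ← map_pow]
          exact ((hk hc hd hcd).map (MulAut.conj τ)) ) := by
      exact Finset.map_noncommProd s _ hk (MulAut.conj τ)
    have heq : ∀ c ∈ s, (MulAut.conj τ) (c ^ k c) = (c ^ k c)⁻¹ := by
      intro c hc
      have : (MulAut.conj τ) c = c⁻¹ := by
        simp only [MulAut.conj_apply, hτinv]
        exact hτc c hc
      rw [map_pow, this, inv_pow]
    rw [hτinv] at hmap
    rw [hmap]
    -- noncommProd of inverses equals inverse of noncommProd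
    apply eq_inv_of_mul_eq_one_left
    have hdistrib := Finset.noncommProd_mul_distrib
      (s := s) (fun c => (MulAut.conj τ) (c ^ k c)) (fun c => c ^ k c)
      (by
        intro c hc d hd hcd
        simp only [Function.onFun, heq c hc, heq d hd]
        exact ((hk hc hd hcd).inv_left).inv_right)
      hk
      (by
        intro c hc d hd hcd
        simp only [Function.onFun, heq d hd]
        by_cases h : c = d
        · subst h; exact (Commute.refl _).inv_right
        · exact ((hk hc hd h).inv_right))
    rw [← hdistrib, Finset.noncommProd_eq_pow_card s _ _ 1
      (fun c hc => by simp only [Pi.mul_apply, heq c hc, inv_mul_cancel]), one_pow]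
  have hτστ : τ * σ * τ = σ⁻¹ := by
    have hk : (↑s : Set (Equiv.Perm (Fin n))).Pairwise (Commute on fun c => c ^ 1) := by
      intro c hc d hd hcd
      simpa [Function.onFun] using hcomm_id hc hd hcd
    have h1 : s.noncommProd (fun c => c ^ 1) hk = σ := by
      rw [← hσprod]
      exact Finset.noncommProd_congr rfl (fun c _ => pow_one c) _
    rw [← h1]
    exact hconj (fun _ => 1) hk
  -- z f commutes with σ
  have hzσ : ∀ f : D, Commute (z f) σ := by
    intro f
    apply Commute.symm
    apply Finset.noncommProd_commute
    intro c hc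
    have hcσ : Commute c σ := by
      rw [← hσprod]
      apply Finset.noncommProd_commute
      intro d hd
      by_cases h : c = d
      · subst h; exact Commute.refl c
      · exact (hpd hc hd h).commute
    exact (hcσ.pow_left _).symm
  -- τ inverts z f
  have hτz : ∀ f : D, τ * z f * τ = (z f)⁻¹ := fun f => hconj (F f) (hcommF f)
  -- evaluation of z f on the support of a factor
  have heval : ∀ (f : D) (c : {x // x ∈ s}) (x : Fin n), x ∈ c.val.support →
      z f x = (c.val ^ (f c).val) x := by
    intro f c x hx
    have hc := c.2
    have hins : s = insert c.val (s.erase c.val) := (Finset.insert_erase hc).symm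
    have hz := Finset.noncommProd_congr hins (fun d _ => rfl) (hcommF f)
    erw [Finset.noncommProd_insert_of_notMem _ _ _ _ (Finset.notMem_erase _ _)] at hz
    have hpd' : (↑(s.erase c.val) : Set (Equiv.Perm (Fin n))).Pairwise
        (fun a b => Equiv.Perm.Disjoint (a ^ F f a) (b ^ F f b)) := by
      intro a ha b hb hab
      exact disjoint_pow_pow
        (hpd (Finset.mem_of_mem_erase ha) (Finset.mem_of_mem_erase hb) hab) _ _
    have hnot : x ∉ ((s.erase c.val).noncommProd (fun d => d ^ F f d)
        (hpd'.imp fun _ _ => Equiv.Perm.Disjoint.commute)).support := by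
      rw [Equiv.Perm.support_noncommProd hpd']
      intro hmem
      rw [Finset.mem_biUnion] at hmem
      obtain ⟨d, hd, hxd⟩ := hmem
      have hxd' : x ∈ d.support := Equiv.Perm.support_pow_le d _ hxd
      exact (Finset.disjoint_left.mp (Equiv.Perm.disjoint_iff_disjoint_support.mp
        (hpd (Finset.mem_of_mem_erase hd) c.2 (Finset.ne_of_mem_erase hd))) hxd') hx
    rw [Equiv.Perm.notMem_support] at hnot
    have hF : F f c.val = (f c).val := by simp only [F, dif_pos hc]
    show (s.noncommProd (fun c => c ^ F f c) (hcommF f)) x = _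
    rw [hz, Equiv.Perm.mul_apply, hnot, hF]
  -- the injection
  let Φ : D → Equiv.Perm (Fin n) × Equiv.Perm (Fin n) := fun f => (z f * τ, σ * (z f * τ))
  have hmemΦ : ∀ f : D, Φ f ∈ Finset.univ.filter
      fun p : Equiv.Perm (Fin n) × Equiv.Perm (Fin n) =>
        p.1 * p.1 = 1 ∧ p.2 * p.2 = 1 ∧ p.2 * p.1 = σ := by
    intro f
    rw [Finset.mem_filter]
    refine ⟨Finset.mem_univ _, ?_, ?_, ?_⟩
    · show z f * τ * (z f * τ) = 1
      calc z f * τ * (z f * τ) = z f * (τ * z f * τ) := by group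
        _ = z f * (z f)⁻¹ := by rw [hτz f]
        _ = 1 := mul_inv_cancel _
    · show σ * (z f * τ) * (σ * (z f * τ)) = 1
      have h1 : z f * τ * σ * (z f * τ) = σ⁻¹ := by
        have e1 : z f * τ * σ * (z f * τ) = z f * (τ * σ * τ) * (τ * z f * τ) := by
          rw [show z f * (τ * σ * τ) * (τ * z f * τ)
              = z f * τ * σ * ((τ * τ) * (z f * τ)) by group, hτ2, one_mul]
        rw [e1, hτστ, hτz f, ((hzσ f).inv_right).eq, mul_assoc,
          mul_inv_cancel, mul_one]
      calc σ * (z f * τ) * (σ * (z f * τ)) = σ * (z f * τ * σ * (z f * τ)) := by group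
        _ = σ * σ⁻¹ := by rw [h1]
        _ = 1 := mul_inv_cancel σ
    · show σ * (z f * τ) * (z f * τ) = σ
      have : z f * τ * (z f * τ) = 1 := by
        calc z f * τ * (z f * τ) = z f * (τ * z f * τ) := by group
          _ = z f * (z f)⁻¹ := by rw [hτz f]
          _ = 1 := mul_inv_cancel _
      rw [mul_assoc, this, mul_one]
  have hinj : Function.Injective Φ := by
    intro f g hfg
    have h1 : z f * τ = z g * τ := congrArg Prod.fst hfg
    have hz_eq : z f = z g := mul_right_cancel h1
    funext c
    have hcyc : c.val.IsCycle := (Equiv.Perm.mem_cycleFactorsFinset_iff.mp c.2).1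
    have hpow : c.val ^ (f c).val = c.val ^ (g c).val := by
      apply Equiv.ext
      intro x
      by_cases hx : x ∈ c.val.support
      · rw [← heval f c x hx, ← heval g c x hx, hz_eq]
      · have hfix : c.val x = x := by
          by_contra h; exact hx (Equiv.Perm.mem_support.mpr h)
        rw [Equiv.Perm.pow_apply_eq_self_of_apply_eq_self hfix,
            Equiv.Perm.pow_apply_eq_self_of_apply_eq_self hfix]
    have hflt : (f c).val < orderOf c.val := (f c).isLt
    have hglt : (g c).val < orderOf c.val := (g c).isLt
    exact Fin.ext (pow_injOn_Iio_orderOf hflt hglt hpow)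
  calc σ.cycleType.prod = Fintype.card D := hcard.symm
    _ = (Finset.univ : Finset D).card := (Finset.card_univ).symm
    _ ≤ _ := Finset.card_le_card_of_injOn Φ (fun f _ => hmemΦ f) (hinj.injOn)
end
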